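/- arXiv:2405.11801 — 2 statements merged into one kernel-verified Lean document; each statement's English description precedes it below -/
import Mathlib

section
/- In the Lorentz model L^{kappa,d} of hyperbolic space with curvature kappa < 0, for points z_1, ..., z_n in L^{kappa,d} and nonnegative weights c_1, ..., c_n (not all zero), the point mu = (1/sqrt(-kappa)) * (sum_i c_i z_i) / |‖sum_j c_j z_j‖_L| lies on L^{kappa,d} and is the global minimizer over L^{kappa,d} of the weighted sum of squared Lorentzian distances F(mu) = sum_i c_i * ‖z_i - mu‖_L^2. -/
open Finset Real

noncomputable def minner {d : ℕ} (x y : Fin (d + 1) → ℝ) : ℝ :=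
  -(x 0 * y 0) + ∑ i : Fin d, x i.succ * y i.succ

/-- The Lorentz model (upper sheet of the hyperboloid) with curvature `κ < 0`. -/
def LorentzModel (κ : ℝ) (d : ℕ) : Set (Fin (d + 1) → ℝ) :=
  {x | minner x x = 1 / κ ∧ 0 < x 0}

lemma minner_comm {d : ℕ} (x y : Fin (d + 1) → ℝ) : minner x y = minner y x := by
  simp [minner, mul_comm]

lemma minner_smul_left {d : ℕ} (r : ℝ) (x y : Fin (d + 1) → ℝ) :
    minner (r • x) y = r * minner x y := by
  simp [minner, Finset.mul_sum, mul_add, mul_assoc]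

lemma minner_add_left {d : ℕ} (x y w : Fin (d + 1) → ℝ) :
    minner (x + y) w = minner x w + minner y w := by
  simp only [minner, Pi.add_apply, add_mul, Finset.sum_add_distrib]
  ring

lemma minner_sub_left {d : ℕ} (x y w : Fin (d + 1) → ℝ) :
    minner (x - y) w = minner x w - minner y w := by
  simp only [minner, Pi.sub_apply, sub_mul, Finset.sum_sub_distrib]
  ring

lemma minner_zero_left {d : ℕ} (w : Fin (d + 1) → ℝ) : minner 0 w = 0 := by
  simp [minner]

lemma minner_sum_left {d : ℕ} {ι : Type*} (s : Finset ι) (f : ι → (Fin (d + 1) → ℝ))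
    (w : Fin (d + 1) → ℝ) : minner (∑ i ∈ s, f i) w = ∑ i ∈ s, minner (f i) w := by
  induction s using Finset.cons_induction with
  | empty => simp [minner_zero_left]
  | cons a s ha ih => simp [Finset.sum_cons, minner_add_left, ih]

lemma minner_sub_sub {d : ℕ} (x y : Fin (d + 1) → ℝ) :
    minner (x - y) (x - y) = minner x x - 2 * minner x y + minner y y := by
  rw [minner_sub_left, minner_comm x (x - y), minner_comm y (x - y),
    minner_sub_left, minner_sub_left, minner_comm y x]
  ring

set_option maxHeartbeats 1000000 in
/-- Reverse Cauchy–Schwarz for future-pointing timelike vectors. -/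
lemma minner_rcs {d : ℕ} (u v : Fin (d + 1) → ℝ) (hu0 : 0 < u 0) (hv0 : 0 < v 0)
    (hu : minner u u < 0) (hv : minner v v < 0) :
    minner u v ≤ -(Real.sqrt (-minner u u) * Real.sqrt (-minner v v)) := by
  have huu : minner u u = -(u 0 * u 0) + ∑ i : Fin d, u i.succ ^ 2 := by simp [minner, pow_two]
  have hvv : minner v v = -(v 0 * v 0) + ∑ i : Fin d, v i.succ ^ 2 := by simp [minner, pow_two]
  set a2 : ℝ := ∑ i : Fin d, u i.succ ^ 2 with ha2
  set b2 : ℝ := ∑ i : Fin d, v i.succ ^ 2 with hb2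
  set A : ℝ := ∑ i : Fin d, u i.succ * v i.succ with hA
  have ha2nn : 0 ≤ a2 := Finset.sum_nonneg fun i _ => sq_nonneg _
  have hb2nn : 0 ≤ b2 := Finset.sum_nonneg fun i _ => sq_nonneg _
  have hCS : A ^ 2 ≤ a2 * b2 :=
    Finset.sum_mul_sq_le_sq_mul_sq Finset.univ (fun i : Fin d => u i.succ) (fun i : Fin d => v i.succ)
  set α := Real.sqrt a2 with hα
  set β := Real.sqrt b2 with hβ
  have hα2 : α ^ 2 = a2 := Real.sq_sqrt ha2nn
  have hβ2 : β ^ 2 = b2 := Real.sq_sqrt hb2nn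
  have hαnn : 0 ≤ α := Real.sqrt_nonneg _
  have hβnn : 0 ≤ β := Real.sqrt_nonneg _
  have hαlt : α < u 0 := by
    have h1 : a2 < u 0 ^ 2 := by nlinarith [hu, huu]
    calc α < Real.sqrt (u 0 ^ 2) := Real.sqrt_lt_sqrt ha2nn h1
    _ = u 0 := Real.sqrt_sq hu0.le
  have hβlt : β < v 0 := by
    have h1 : b2 < v 0 ^ 2 := by nlinarith [hv, hvv]
    calc β < Real.sqrt (v 0 ^ 2) := Real.sqrt_lt_sqrt hb2nn h1
    _ = v 0 := Real.sqrt_sq hv0.le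
  have hAle : A ≤ α * β := by
    have h2 : A ^ 2 ≤ (α * β) ^ 2 := by nlinarith
    nlinarith [le_abs_self A, abs_nonneg A, mul_nonneg hαnn hβnn, sq_abs A]
  have key : Real.sqrt (-minner u u) * Real.sqrt (-minner v v) ≤ u 0 * v 0 - α * β := by
    have hmu : -minner u u = u 0 ^ 2 - α ^ 2 := by rw [huu, hα2]; ring
    have hmv : -minner v v = v 0 ^ 2 - β ^ 2 := by rw [hvv, hβ2]; ring
    rw [hmu, hmv, ← Real.sqrt_mul (by nlinarith)]
    have hrhs : 0 ≤ u 0 * v 0 - α * β := by nlinarith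
    rw [show u 0 * v 0 - α * β = Real.sqrt ((u 0 * v 0 - α * β) ^ 2) from
      (Real.sqrt_sq hrhs).symm]
    apply Real.sqrt_le_sqrt
    nlinarith [sq_nonneg (u 0 * β - α * v 0)]
  have huv : minner u v = -(u 0 * v 0) + A := rfl
  rw [huv]
  nlinarith [hAle, key]

set_option maxHeartbeats 1000000 in
/-- **Geometric centroid (Theorem 5.2).** For points `z i` on the hyperboloid and
nonnegative weights `c i`, not all zero, the rescaled arithmetic mean
`μ = (1/√(-κ)) (∑ c_i z_i)/|‖∑ c_j z_j‖_L|` lies on the hyperboloid and globally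
minimizes the weighted sum of squared Lorentzian distances
`F(p) = ∑ c_i ‖z_i - p‖_L²` over the hyperboloid. -/
theorem lorentz_centroid_minimizes
    (d n : ℕ) (κ : ℝ) (hκ : κ < 0)
    (z : Fin n → (Fin (d + 1) → ℝ)) (hz : ∀ i, z i ∈ LorentzModel κ d)
    (c : Fin n → ℝ) (hc : ∀ i, 0 ≤ c i) (hc0 : ∃ i, 0 < c i)
    (μ : Fin (d + 1) → ℝ)
    (hμ : μ = (1 / (Real.sqrt (-κ) *
        Real.sqrt |minner (∑ i, c i • z i) (∑ i, c i • z i)|)) • ∑ i, c i • z i) :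
    μ ∈ LorentzModel κ d ∧
      ∀ p ∈ LorentzModel κ d,
        (∑ i, c i * minner (z i - μ) (z i - μ)) ≤ ∑ i, c i * minner (z i - p) (z i - p) := by
  have hκ' : (0:ℝ) < -κ := by linarith
  have h1κ : (1:ℝ)/κ < 0 := div_neg_of_pos_of_neg one_pos hκ
  set s : Fin (d+1) → ℝ := ∑ i, c i • z i with hs
  -- pairwise reverse Cauchy-Schwarz on the hyperboloid
  have hpair : ∀ i j, minner (z i) (z j) ≤ 1/κ := by
    intro i j
    have h := minner_rcs (z i) (z j) (hz i).2 (hz j).2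
      (by rw [(hz i).1]; exact h1κ) (by rw [(hz j).1]; exact h1κ)
    rw [(hz i).1, (hz j).1] at h
    have hm : Real.sqrt (-(1/κ)) * Real.sqrt (-(1/κ)) = -(1/κ) :=
      Real.mul_self_sqrt (by linarith)
    linarith
  obtain ⟨i0, hi0⟩ := hc0
  have hC : 0 < ∑ i, c i :=
    Finset.sum_pos' (fun i _ => hc i) ⟨i0, Finset.mem_univ _, hi0⟩
  -- s is timelike
  have hss_expand : minner s s = ∑ i, ∑ j, c i * c j * minner (z i) (z j) := by
    rw [hs, minner_sum_left]
    refine Finset.sum_congr rfl fun i _ => ?_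
    rw [minner_smul_left, minner_comm, minner_sum_left, Finset.mul_sum]
    refine Finset.sum_congr rfl fun j _ => ?_
    rw [minner_smul_left, minner_comm]
    ring
  have hss : minner s s ≤ (∑ i, c i)^2 * (1/κ) := by
    rw [hss_expand]
    have hb : ∀ i j : Fin n, c i * c j * minner (z i) (z j) ≤ c i * c j * (1/κ) := fun i j =>
      mul_le_mul_of_nonneg_left (hpair i j) (mul_nonneg (hc i) (hc j))
    calc ∑ i, ∑ j, c i * c j * minner (z i) (z j)
        ≤ ∑ i, ∑ j, c i * c j * (1/κ) :=
          Finset.sum_le_sum fun i _ => Finset.sum_le_sum fun j _ => hb i j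
      _ = (∑ i, c i)^2 * (1/κ) := by
          rw [sq, Finset.sum_mul_sum]
          rw [Finset.sum_mul]
          refine Finset.sum_congr rfl fun i _ => ?_
          rw [Finset.sum_mul]
  have hmneg : minner s s < 0 :=
    lt_of_le_of_lt hss (mul_neg_of_pos_of_neg (pow_pos hC 2) h1κ)
  have hs0 : 0 < s 0 := by
    rw [hs]
    simp only [Finset.sum_apply, Pi.smul_apply, smul_eq_mul]
    exact Finset.sum_pos' (fun i _ => mul_nonneg (hc i) (hz i).2.le)
      ⟨i0, Finset.mem_univ _, mul_pos hi0 (hz i0).2⟩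
  set m : ℝ := minner s s with hm
  have hmabs : |m| = -m := abs_of_neg hmneg
  set t : ℝ := Real.sqrt (-m) with ht
  have htpos : 0 < t := Real.sqrt_pos.mpr (by linarith)
  have ht2 : t^2 = -m := Real.sq_sqrt (by linarith)
  have hκs : 0 < Real.sqrt (-κ) := Real.sqrt_pos.mpr hκ'
  set N : ℝ := Real.sqrt (-κ) * Real.sqrt |m| with hN
  have hNt : N = Real.sqrt (-κ) * t := by rw [hN, hmabs, ht]
  have hNpos : 0 < N := by rw [hNt]; exact mul_pos hκs htpos
  have hμs : μ = (1/N) • s := hμ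
  -- μ is on the hyperboloid
  have hμμ : minner μ μ = 1/κ := by
    have h1 : minner μ μ = (1/N)^2 * m := by
      rw [hμs, minner_smul_left, minner_comm, minner_smul_left, ← hm]; ring
    have hN2 : N^2 = κ * m := by
      rw [hNt, mul_pow, Real.sq_sqrt hκ'.le, ht2]; ring
    rw [h1]
    rw [div_pow, one_pow, hN2]
    have hgen : ∀ a b : ℝ, b ≠ 0 → 1 / (a * b) * b = 1 / a := by
      intro a b hb; rw [mul_comm a b, ← div_div, div_mul_eq_mul_div, one_div_mul_cancel hb]
    exact hgen κ m hmneg.ne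
  have hμ0 : 0 < μ 0 := by
    rw [hμs]
    simp only [Pi.smul_apply, smul_eq_mul]
    exact mul_pos (by positivity) hs0
  have hμmem : μ ∈ LorentzModel κ d := ⟨hμμ, hμ0⟩
  -- minner s μ value
  have hsμ : minner s μ = -(t / Real.sqrt (-κ)) := by
    rw [hμs, minner_comm, minner_smul_left, ← hm, hNt]
    have hmt : m = -(t^2) := by rw [ht2]; ring
    rw [hmt]
    field_simp
  -- for any p on the hyperboloid, minner s p ≤ minner s μ
  have hbound : ∀ p ∈ LorentzModel κ d, minner s p ≤ minner s μ := by
    intro p hp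
    have h := minner_rcs s p hs0 hp.2 hmneg (by rw [hp.1]; exact h1κ)
    rw [hp.1, ← hm] at h
    have hinv : Real.sqrt (-(1/κ)) = (Real.sqrt (-κ))⁻¹ := by
      rw [show -(1/κ) = (-κ)⁻¹ by rw [one_div, inv_neg], Real.sqrt_inv]
    rw [hinv, ← ht] at h
    rw [hsμ]
    calc minner s p ≤ -(t * (Real.sqrt (-κ))⁻¹) := h
      _ = -(t / Real.sqrt (-κ)) := by ring
  -- objective expansion
  have key : ∀ p : Fin (d+1) → ℝ, minner p p = 1/κ →
      (∑ i, c i * minner (z i - p) (z i - p)) =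
        2 * (∑ i, c i) * (1/κ) - 2 * minner s p := by
    intro p hp
    have hsp : minner s p = ∑ i, c i * minner (z i) p := by
      rw [hs, minner_sum_left]
      exact Finset.sum_congr rfl fun i _ => minner_smul_left _ _ _
    have hterm : ∀ i : Fin n, c i * minner (z i - p) (z i - p) =
        c i * (2 * (1/κ)) - 2 * (c i * minner (z i) p) := by
      intro i
      rw [minner_sub_sub, (hz i).1, hp]
      ring
    rw [hsp]
    simp_rw [hterm]
    rw [Finset.sum_sub_distrib, ← Finset.sum_mul, ← Finset.mul_sum]
    ring
  refine ⟨hμmem, fun p hp => ?_⟩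
  rw [key μ hμμ, key p hp.1]
  have := hbound p hp
  linarith
end

section
/- The Lorentzian weighted centroid equals the Poincaré gyro-midpoint under stereographic projection: if z_i = (t_i, s_i) in L^{kappa,d} with weights c_i >= 0, and S(t,s) = s / (1 + sqrt(-kappa) t) is the stereographic projection from the Lorentz model to the Poincaré ball B^{kappa,d}, then S applied to the Lorentzian centroid mu = (1/sqrt(-kappa)) (sum_i c_i z_i)/|‖sum_i c_i z_i‖_L| equals the gyro-midpoint (sum_i c_i lambda^kappa_{b_i} b_i) / (sum_i c_i (lambda^kappa_{b_i} - 1)) rescaled by the map bbar -> bbar / (1 + sqrt(1 + kappa ‖bbar‖^2)), where b_i = S(z_i) and lambda^kappa_b = 2 / (1 + kappa ‖b‖^2) is the conformal factor. -/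
open Finset Real

/-- **Lorentzian centroid equals the Poincaré gyro-midpoint under stereographic
projection (Remark to Theorem 5.2).** Writing the points of the Lorentz model as
`z_i = (t_i, s_i)` with weights `c_i ≥ 0`, the stereographic projection
`S(t,s) = s/(1 + √(-κ) t)` of the Lorentzian centroid
`μ = (1/√(-κ)) (∑ c_i z_i)/|‖∑ c_i z_i‖_L|` equals
`b̄ / (1 + √(1 + κ‖b̄‖²))` where `b̄ = (1/√(-κ)) (∑ c_i s_i)/(∑ c_i t_i)`, and `b̄`
equals the gyro-midpoint `(∑ c_i λ_i b_i)/(∑ c_i (λ_i - 1))` with `b_i = S(z_i)` and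
conformal factors `λ_i = 2/(1 + κ‖b_i‖²)`. -/
theorem lorentz_centroid_eq_gyromidpoint
    (d n : ℕ) (κ : ℝ) (hκ : κ < 0)
    (t : Fin n → ℝ) (s : Fin n → EuclideanSpace ℝ (Fin d))
    (hhyp : ∀ i, -(t i) ^ 2 + ‖s i‖ ^ 2 = 1 / κ ∧ 0 < t i)
    (c : Fin n → ℝ) (hc : ∀ i, 0 ≤ c i) (hc0 : ∃ i, 0 < c i)
    (b : Fin n → EuclideanSpace ℝ (Fin d))
    (hb : ∀ i, b i = (1 + Real.sqrt (-κ) * t i)⁻¹ • s i)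
    (lam : Fin n → ℝ) (hlam : ∀ i, lam i = 2 / (1 + κ * ‖b i‖ ^ 2))
    (T : ℝ) (hT : T = ∑ i, c i * t i)
    (Ssum : EuclideanSpace ℝ (Fin d)) (hS : Ssum = ∑ i, c i • s i)
    (Nrm : ℝ) (hNrm : Nrm = Real.sqrt |(-(T ^ 2) + ‖Ssum‖ ^ 2)|)
    (μt : ℝ) (hμt : μt = T / (Real.sqrt (-κ) * Nrm))
    (μs : EuclideanSpace ℝ (Fin d)) (hμs : μs = (Real.sqrt (-κ) * Nrm)⁻¹ • Ssum)
    (bbar : EuclideanSpace ℝ (Fin d)) (hbbar : bbar = (Real.sqrt (-κ) * T)⁻¹ • Ssum) :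
    (1 + Real.sqrt (-κ) * μt)⁻¹ • μs
        = (1 + Real.sqrt (1 + κ * ‖bbar‖ ^ 2))⁻¹ • bbar ∧
      bbar = (∑ i, c i * (lam i - 1))⁻¹ • ∑ i, (c i * lam i) • b i := by
  have hκ0 : κ ≠ 0 := ne_of_lt hκ
  have ha : 0 < Real.sqrt (-κ) := Real.sqrt_pos.mpr (by linarith)
  set a := Real.sqrt (-κ) with haa
  have ha2 : a ^ 2 = -κ := Real.sq_sqrt (by linarith)
  have hκa : κ = -a ^ 2 := by linarith
  have ht : ∀ i, 0 < t i := fun i => (hhyp i).2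
  have hs2 : ∀ i, ‖s i‖ ^ 2 = t i ^ 2 + 1 / κ := by
    intro i; have := (hhyp i).1; linarith
  have h1κ : 1 / κ < 0 := by
    apply div_neg_of_pos_of_neg one_pos hκ
  have hst : ∀ i, ‖s i‖ < t i := by
    intro i
    have h1 : ‖s i‖ ^ 2 < t i ^ 2 := by rw [hs2 i]; linarith
    exact lt_of_pow_lt_pow_left₀ 2 (le_of_lt (ht i)) h1
  obtain ⟨i0, hi0⟩ := hc0
  have hT0 : 0 < T := by
    rw [hT]
    apply Finset.sum_pos' (fun i _ => mul_nonneg (hc i) (ht i).le)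
    exact ⟨i0, Finset.mem_univ _, mul_pos hi0 (ht i0)⟩
  have hSn : ‖Ssum‖ < T := by
    calc ‖Ssum‖ ≤ ∑ i, ‖c i • s i‖ := by rw [hS]; exact norm_sum_le _ _
      _ = ∑ i, c i * ‖s i‖ := by
          apply Finset.sum_congr rfl; intro i _
          rw [norm_smul, Real.norm_eq_abs, abs_of_nonneg (hc i)]
      _ < ∑ i, c i * t i := by
          apply Finset.sum_lt_sum
          · intro i _; exact mul_le_mul_of_nonneg_left (hst i).le (hc i)
          · exact ⟨i0, Finset.mem_univ _, by
              have := hst i0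
              have := norm_nonneg (s i0)
              nlinarith⟩
      _ = T := hT.symm
  have hTS : 0 < T ^ 2 - ‖Ssum‖ ^ 2 := by nlinarith [norm_nonneg Ssum]
  have hNrm' : Nrm = Real.sqrt (T ^ 2 - ‖Ssum‖ ^ 2) := by
    rw [hNrm, abs_of_nonpos (by linarith)]; ring_nf
  have hN0 : 0 < Nrm := by rw [hNrm']; exact Real.sqrt_pos.mpr hTS
  have hN2 : Nrm ^ 2 = T ^ 2 - ‖Ssum‖ ^ 2 := by
    rw [hNrm']; exact Real.sq_sqrt hTS.le
  -- Part B ingredients: lam i = 1 + a * t i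
  have hden : ∀ i, (0:ℝ) < 1 + a * t i := fun i => by nlinarith [mul_pos ha (ht i)]
  have hlam' : ∀ i, lam i = 1 + a * t i := by
    intro i
    have hb2 : ‖b i‖ ^ 2 = ((1 + a * t i)⁻¹) ^ 2 * ‖s i‖ ^ 2 := by
      rw [hb i, norm_smul, Real.norm_eq_abs, abs_of_pos (inv_pos.mpr (hden i))]
      ring
    have key : 1 + κ * ‖b i‖ ^ 2 = 2 / (1 + a * t i) := by
      rw [hb2, hs2 i, hκa]
      have h1 : (1 + a * t i) ≠ 0 := (hden i).ne'
      have h2 : a ≠ 0 := ha.ne'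
      field_simp
      ring
    rw [hlam i, key]
    field_simp
  -- denominator sum
  have hdsum : ∑ i, c i * (lam i - 1) = a * T := by
    rw [hT, Finset.mul_sum]
    apply Finset.sum_congr rfl
    intro i _; rw [hlam' i]; ring
  -- numerator sum
  have hnsum : ∑ i, (c i * lam i) • b i = Ssum := by
    rw [hS]
    apply Finset.sum_congr rfl
    intro i _
    rw [hlam' i, hb i, smul_smul]
    congr 1
    field_simp
    rw [mul_div_assoc, div_self (hden i).ne', mul_one]
  constructor
  · -- Part A
    have hbb2 : ‖bbar‖ ^ 2 = ((a * T)⁻¹) ^ 2 * ‖Ssum‖ ^ 2 := by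
      rw [hbbar, norm_smul, Real.norm_eq_abs,
        abs_of_pos (inv_pos.mpr (mul_pos ha hT0))]
      ring
    have hsq : 1 + κ * ‖bbar‖ ^ 2 = (Nrm / T) ^ 2 := by
      rw [hbb2, hκa, div_pow, hN2]
      have h2 : a ≠ 0 := ha.ne'
      have h3 : T ≠ 0 := hT0.ne'
      field_simp
      ring
    have hsqrt : Real.sqrt (1 + κ * ‖bbar‖ ^ 2) = Nrm / T := by
      rw [hsq, Real.sqrt_sq (by positivity)]
    rw [hsqrt, hμs, hμt, hbbar, smul_smul, smul_smul]
    congr 1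
    have hNe : Nrm ≠ 0 := hN0.ne'
    have hTe : T ≠ 0 := hT0.ne'
    have hae : a ≠ 0 := ha.ne'
    have hNT : Nrm + T ≠ 0 := by positivity
    field_simp
    ring
  · rw [hdsum, hnsum, hbbar]
end
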